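/- Let l ∈ ℕ^n have positive entries, Γ_0(l) = {u : ℤ^n → ℝ : u(i + l_k e_k) = u(i) for all i and 1 ≤ k ≤ n}, J_0^l(u) = Σ_{i : 0 ≤ i_k < l_k for 1 ≤ k ≤ n} S_i(u), c_0(l) = inf_{u ∈ Γ_0(l)} J_0^l(u), and M_0(l) = {u ∈ Γ_0(l) : J_0^l(u) = c_0(l)}. Then M_0(l) is nonempty, M_0(l) = M_0, and c_0(l) = (Π_{i=1}^n l_i) · c_0. -/

import Mathlib

open scoped BigOperators

namespace FK

/-- The lattice `ℤ^n`. -/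
abbrev Lat (n : ℕ) := Fin n → ℤ

/-- The `ℓ¹` norm on `ℤ^n`. -/
def latNorm {n : ℕ} (i : Lat n) : ℕ := ∑ k, (i k).natAbs

/-- The ball `B_0^r = {k ∈ ℤ^n : ‖k‖ ≤ r}`. -/
abbrev B0 (n r : ℕ) := {k : Lat n // latNorm k ≤ r}

lemma B0.coord_mem {n r : ℕ} (k : B0 n r) (i : Fin n) :
    k.1 i ∈ Finset.Icc (-(r : ℤ)) (r : ℤ) := by
  have h1 : (k.1 i).natAbs ≤ latNorm k.1 :=
    Finset.single_le_sum (f := fun j => (k.1 j).natAbs) (fun _ _ => Nat.zero_le _)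
      (Finset.mem_univ i)
  have h2 := k.2
  simp only [Finset.mem_Icc]
  omega

noncomputable instance B0.instFintype (n r : ℕ) : Fintype (B0 n r) :=
  Fintype.ofInjective
    (fun k : B0 n r => (fun i => (⟨k.1 i, B0.coord_mem k i⟩ : (Finset.Icc (-(r : ℤ)) (r : ℤ)))))
    (fun a b h => Subtype.ext (funext fun i => congrArg Subtype.val (congrFun h i)))

/-- The center of the ball `B_0^r`. -/
def B0.zero (n r : ℕ) : B0 n r := ⟨0, by simp [latNorm]⟩

/-- The local potential `S_j(u) = s((i ↦ u(j+i))|_{B_0^r})`. -/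
noncomputable def Spot {n r : ℕ} (s : (B0 n r → ℝ) → ℝ) (j : Lat n) (u : Lat n → ℝ) : ℝ :=
  s fun k => u (j + k.1)

/-- The partial derivative of `s : ℝ^{B_0^r} → ℝ` with respect to the coordinate `k`. -/
noncomputable def pder {n r : ℕ} (s : (B0 n r → ℝ) → ℝ) (k : B0 n r) (x : B0 n r → ℝ) : ℝ :=
  deriv (fun t => s (Function.update x k t)) (x k)

/-- The partial derivative `∂_i S_j(u)` of `S_j` with respect to the variable `u(i)`. -/
noncomputable def pderS {n r : ℕ} (s : (B0 n r → ℝ) → ℝ) (i j : Lat n) (u : Lat n → ℝ) : ℝ :=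
  deriv (fun t => Spot s j (Function.update u i t)) (u i)

/-- Conditions (S1)–(S3) on the potential, together with `C²` smoothness. -/
structure IsPotential (n r : ℕ) (s : (B0 n r → ℝ) → ℝ) : Prop where
  smooth : ContDiff ℝ 2 s
  periodic : ∀ x : B0 n r → ℝ, s (fun k => x k + 1) = s x
  bddBelow : ∃ M : ℝ, ∀ x, M ≤ s x
  coercive : ∀ k j : B0 n r, latNorm (k.1 - j.1) = 1 →
    ∀ C : ℝ, ∃ R : ℝ, ∀ x : B0 n r → ℝ, R ≤ |x k - x j| → C ≤ s x
  cross_nonpos : ∀ k j : B0 n r, k ≠ j → ∀ x, pder (pder s j) k x ≤ 0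
  cross_neg : ∀ j : B0 n r, latNorm j.1 = 1 → ∀ x, pder (pder s j) (B0.zero n r) x < 0

/-- `u` satisfies the Euler–Lagrange equation (EL) at the site `i`. -/
def SolvesAt {n r : ℕ} (s : (B0 n r → ℝ) → ℝ) (u : Lat n → ℝ) (i : Lat n) : Prop :=
  ∑ k : B0 n r, pderS s i (i + k.1) u = 0

/-- `u` is a solution of the Euler–Lagrange equation (EL). -/
def IsSolution {n r : ℕ} (s : (B0 n r → ℝ) → ℝ) (u : Lat n → ℝ) : Prop :=
  ∀ i : Lat n, SolvesAt s u i

/-- The `m`-th standard basis vector of `ℤ^n` (`0`-indexed: `latE 0 = e_1`). -/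
def latE {n : ℕ} (m : ℕ) : Lat n := fun k => if (k : ℕ) = m then 1 else 0

/-- The lattice point `T_i = (i,0,…,0)`. -/
def latT {n : ℕ} (i : ℤ) : Lat n := fun k => if (k : ℕ) = 0 then i else 0

/-- The first coordinate index of `Fin (n+2)`. -/
def coord0 (n : ℕ) : Fin (n + 2) := ⟨0, by omega⟩

/-- The second coordinate index of `Fin (n+2)`. -/
def coord1 (n : ℕ) : Fin (n + 2) := ⟨1, by omega⟩

/-- Configurations of period one in every coordinate direction (the set `Γ_0`). -/
def fullyPeriodic {n : ℕ} (u : Lat n → ℝ) : Prop :=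
  ∀ i : Lat n, ∀ k : Fin n, u (i + latE (k : ℕ)) = u i

noncomputable def J0 {n r : ℕ} (s : (B0 n r → ℝ) → ℝ) (u : Lat n → ℝ) : ℝ := Spot s 0 u

noncomputable def c0 {n r : ℕ} (s : (B0 n r → ℝ) → ℝ) : ℝ :=
  sInf (J0 s '' {u | fullyPeriodic u})

def M0 {n r : ℕ} (s : (B0 n r → ℝ) → ℝ) : Set (Lat n → ℝ) :=
  {u | fullyPeriodic u ∧ J0 s u = c0 s}

/-- `v`, `w` form an adjacent (gap) pair of the set `A`:  `v < w` pointwise, both belong to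
`A`, and no element of `A` lies strictly between them. -/
def Adjacent {n : ℕ} (A : Set (Lat n → ℝ)) (v w : Lat n → ℝ) : Prop :=
  v ∈ A ∧ w ∈ A ∧ (∀ i, v i < w i) ∧ ∀ u ∈ A, v ≤ u → u ≤ w → u = v ∨ u = w

/-- Configurations of period one in the coordinate directions `2,…,n`. -/
def tailPeriodic {n : ℕ} (u : Lat n → ℝ) : Prop :=
  ∀ i : Lat n, ∀ k : Fin n, (k : ℕ) ≠ 0 → u (i + latE (k : ℕ)) = u i

/-- The set `Γ̂_1(v,w)`. -/
def Gamma1hat {n : ℕ} (v w : Lat n → ℝ) : Set (Lat n → ℝ) :=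
  {u | tailPeriodic u ∧ v ≤ u ∧ u ≤ w}

noncomputable def J1i {n r : ℕ} (s : (B0 n r → ℝ) → ℝ) (i : ℤ) (u : Lat n → ℝ) : ℝ :=
  Spot s (latT i) u - c0 s

noncomputable def J1pq {n r : ℕ} (s : (B0 n r → ℝ) → ℝ) (p q : ℤ) (u : Lat n → ℝ) : ℝ :=
  ∑ i ∈ Finset.Icc p q, J1i s i u

/-- The renormalized functional `J_1 = liminf_{p→-∞, q→∞} J_{1;p,q}`, as an extended real. -/
noncomputable def J1 {n r : ℕ} (s : (B0 n r → ℝ) → ℝ) (u : Lat n → ℝ) : EReal :=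
  Filter.liminf (fun pq : ℤ × ℤ => ((J1pq s pq.1 pq.2 u : ℝ) : EReal))
    (Filter.atBot ×ˢ Filter.atTop)

/-- The filter `|i| → ∞` on `ℤ`. -/
noncomputable def absAtTop : Filter ℤ := Filter.comap (fun i : ℤ => |i|) Filter.atTop

/-- The set `Γ_1(v,w)` of configurations heteroclinic in `i_1` from `v` to `w`. -/
def Gamma1 {n : ℕ} (v w : Lat n → ℝ) : Set (Lat n → ℝ) :=
  {u | u ∈ Gamma1hat v w ∧
    Filter.Tendsto (fun i : ℤ => |u (latT i) - v (latT i)|) Filter.atBot (nhds 0) ∧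
    Filter.Tendsto (fun i : ℤ => |u (latT i) - w (latT i)|) Filter.atTop (nhds 0)}

noncomputable def c1 {n r : ℕ} (s : (B0 n r → ℝ) → ℝ) (v w : Lat n → ℝ) : EReal :=
  sInf (J1 s '' Gamma1 v w)

def M1 {n r : ℕ} (s : (B0 n r → ℝ) → ℝ) (v w : Lat n → ℝ) : Set (Lat n → ℝ) :=
  {u ∈ Gamma1 v w | J1 s u = c1 s v w}

/-- The set `Γ_1(w,v)` of configurations heteroclinic in `i_1` from `w` down to `v`. -/
def Gamma1rev {n : ℕ} (v w : Lat n → ℝ) : Set (Lat n → ℝ) :=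
  {u | u ∈ Gamma1hat v w ∧
    Filter.Tendsto (fun i : ℤ => |u (latT i) - w (latT i)|) Filter.atBot (nhds 0) ∧
    Filter.Tendsto (fun i : ℤ => |u (latT i) - v (latT i)|) Filter.atTop (nhds 0)}

noncomputable def c1rev {n r : ℕ} (s : (B0 n r → ℝ) → ℝ) (v w : Lat n → ℝ) : EReal :=
  sInf (J1 s '' Gamma1rev v w)

def M1rev {n r : ℕ} (s : (B0 n r → ℝ) → ℝ) (v w : Lat n → ℝ) : Set (Lat n → ℝ) :=
  {u ∈ Gamma1rev v w | J1 s u = c1rev s v w}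

/-- The set `Γ_1(v)`, for `v ∈ M_0`. -/
def Gamma1v {n : ℕ} (v : Lat n → ℝ) : Set (Lat n → ℝ) :=
  {u | u ∈ Gamma1hat (fun i => v i - 1) (fun i => v i + 1) ∧
    Filter.Tendsto (fun i : ℤ => |u (latT i) - v (latT i)|) absAtTop (nhds 0)}

noncomputable def c1v {n r : ℕ} (s : (B0 n r → ℝ) → ℝ) (v : Lat n → ℝ) : EReal :=
  sInf (J1 s '' Gamma1v v)

def M1v {n r : ℕ} (s : (B0 n r → ℝ) → ℝ) (v : Lat n → ℝ) : Set (Lat n → ℝ) :=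
  {u ∈ Gamma1v v | J1 s u = c1v s v}

/-! ### Periodic configurations with general periods (`Γ_0(l)` etc.) -/

def GammaPer {n : ℕ} (l : Fin n → ℕ) : Set (Lat n → ℝ) :=
  {u | ∀ i : Lat n, ∀ k : Fin n, u (i + (l k : ℤ) • latE (k : ℕ)) = u i}

noncomputable def J0l {n r : ℕ} (s : (B0 n r → ℝ) → ℝ) (l : Fin n → ℕ) (u : Lat n → ℝ) : ℝ :=
  ∑ i ∈ Fintype.piFinset (fun k => Finset.Ico (0 : ℤ) (l k)), Spot s i u

noncomputable def c0l {n r : ℕ} (s : (B0 n r → ℝ) → ℝ) (l : Fin n → ℕ) : ℝ :=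
  sInf (J0l s l '' GammaPer l)

def M0l {n r : ℕ} (s : (B0 n r → ℝ) → ℝ) (l : Fin n → ℕ) : Set (Lat n → ℝ) :=
  {u ∈ GammaPer l | J0l s l u = c0l s l}

/-! ### The `l`-periodic analogues of `Γ_1` (for Proposition 3.20) -/

/-- The finite slice `{j | j_1 = i, 0 ≤ j_k < l_k (k ≥ 2)}`. -/
noncomputable def sliceBox {n : ℕ} (l : Fin n → ℕ) (i : ℤ) : Finset (Lat n) :=
  Fintype.piFinset fun k => if (k : ℕ) = 0 then {i} else Finset.Ico (0 : ℤ) (l k)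

def tailPeriodicL {n : ℕ} (l : Fin n → ℕ) (u : Lat n → ℝ) : Prop :=
  ∀ i : Lat n, ∀ k : Fin n, (k : ℕ) ≠ 0 → u (i + (l k : ℤ) • latE (k : ℕ)) = u i

/-- `∏_{k=2}^{n} l_k`. -/
noncomputable def tailProd {n : ℕ} (l : Fin n → ℕ) : ℝ :=
  ∏ k ∈ Finset.univ.filter (fun k : Fin n => (k : ℕ) ≠ 0), (l k : ℝ)

noncomputable def J1il {n r : ℕ} (s : (B0 n r → ℝ) → ℝ) (l : Fin n → ℕ) (i : ℤ)
    (u : Lat n → ℝ) : ℝ :=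
  (∑ j ∈ sliceBox l i, Spot s j u) - tailProd l * c0 s

noncomputable def J1pql {n r : ℕ} (s : (B0 n r → ℝ) → ℝ) (l : Fin n → ℕ) (p q : ℤ)
    (u : Lat n → ℝ) : ℝ :=
  ∑ i ∈ Finset.Icc p q, J1il s l i u

noncomputable def J1l {n r : ℕ} (s : (B0 n r → ℝ) → ℝ) (l : Fin n → ℕ) (u : Lat n → ℝ) :
    EReal :=
  Filter.liminf (fun pq : ℤ × ℤ => ((J1pql s l pq.1 pq.2 u : ℝ) : EReal))
    (Filter.atBot ×ˢ Filter.atTop)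

def Gamma1hatL {n : ℕ} (l : Fin n → ℕ) (v w : Lat n → ℝ) : Set (Lat n → ℝ) :=
  {u | tailPeriodicL l u ∧ v ≤ u ∧ u ≤ w}

def Gamma1L {n : ℕ} (l : Fin n → ℕ) (v w : Lat n → ℝ) : Set (Lat n → ℝ) :=
  {u | u ∈ Gamma1hatL l v w ∧
    Filter.Tendsto (fun i : ℤ => ∑ j ∈ sliceBox l i, |u j - v j|) Filter.atBot (nhds 0) ∧
    Filter.Tendsto (fun i : ℤ => ∑ j ∈ sliceBox l i, |u j - w j|) Filter.atTop (nhds 0)}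

noncomputable def c1L {n r : ℕ} (s : (B0 n r → ℝ) → ℝ) (l : Fin n → ℕ) (v w : Lat n → ℝ) :
    EReal :=
  sInf (J1l s l '' Gamma1L l v w)

def M1L {n r : ℕ} (s : (B0 n r → ℝ) → ℝ) (l : Fin n → ℕ) (v w : Lat n → ℝ) :
    Set (Lat n → ℝ) :=
  {u ∈ Gamma1L l v w | J1l s l u = c1L s l v w}

/-! ### Minimal and Birkhoff configurations -/

/-- `u` is a (global) minimizer for the potentials `S_j`. -/
def Minimal {n r : ℕ} (s : (B0 n r → ℝ) → ℝ) (u : Lat n → ℝ) : Prop :=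
  ∀ B : Finset (Lat n), ∀ v : Lat n → ℝ,
    (∀ i : Lat n, v i ≠ 0 → i ∈ B ∧ ∀ k : Lat n, latNorm (k - i) ≤ r → k ∈ B) →
    ∑ j ∈ B, Spot s j u ≤ ∑ j ∈ B, Spot s j (u + v)

/-- `u` is Birkhoff: all its integer translates are comparable with `u`. -/
def Birkhoff {n : ℕ} (u : Lat n → ℝ) : Prop :=
  ∀ k : Fin n, ∀ j : ℤ,
    (∀ i, u (i + j • latE (k : ℕ)) < u i) ∨ (∀ i, u (i + j • latE (k : ℕ)) = u i) ∨
      (∀ i, u i < u (i + j • latE (k : ℕ)))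

/-! ### The second-order objects (`Γ̂_2`, `J_2`, `M_2`) -/

/-- Configurations of period one in the coordinate directions `3,…,n`. -/
def tailPeriodic2 {n : ℕ} (u : Lat n → ℝ) : Prop :=
  ∀ i : Lat n, ∀ k : Fin n, 2 ≤ (k : ℕ) → u (i + latE (k : ℕ)) = u i

/-- The set `Γ̂_2(v,w)`. -/
def Gamma2hat {n : ℕ} (v w : Lat n → ℝ) : Set (Lat n → ℝ) :=
  {u | tailPeriodic2 u ∧ v ≤ u ∧ u ≤ w}

/-- The row `E_i = {j ∈ ℤ^n : j_2 = i, j_3 = ⋯ = j_n = 0}`. -/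
def Erow (n : ℕ) (i : ℤ) : Set (Lat n) :=
  {j | (∀ k : Fin n, (k : ℕ) = 1 → j k = i) ∧ ∀ k : Fin n, 2 ≤ (k : ℕ) → j k = 0}

/-- `J_{2,i}(u) = J_1(τ²_{-i} u) - c_1 = ∑_{j ∈ E_0} [S_j(τ²_{-i}u) - S_j(v)]`, where `v` is the
base configuration. -/
noncomputable def J2i {n r : ℕ} (s : (B0 n r → ℝ) → ℝ) (v : Lat n → ℝ) (i : ℤ)
    (u : Lat n → ℝ) : ℝ :=
  ∑' j : Erow n 0, (Spot s j.1 (fun x => u (x + i • latE 1)) - Spot s j.1 v)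

noncomputable def J2pq {n r : ℕ} (s : (B0 n r → ℝ) → ℝ) (v : Lat n → ℝ) (p q : ℤ)
    (u : Lat n → ℝ) : ℝ :=
  ∑ i ∈ Finset.Icc p q, J2i s v i u

/-- The renormalized functional `J_2`, as an extended real. -/
noncomputable def J2 {n r : ℕ} (s : (B0 n r → ℝ) → ℝ) (v : Lat n → ℝ) (u : Lat n → ℝ) :
    EReal :=
  Filter.liminf (fun pq : ℤ × ℤ => ((J2pq s v pq.1 pq.2 u : ℝ) : EReal))
    (Filter.atBot ×ˢ Filter.atTop)

/-- The set `Γ_2(v,w)` of configurations heteroclinic in `i_2` from `v` to `w`. -/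
def Gamma2 {n : ℕ} (v w : Lat n → ℝ) : Set (Lat n → ℝ) :=
  {u | u ∈ Gamma2hat v w ∧
    Filter.Tendsto (fun i : ℤ => ∑' j : Erow n i, |u j.1 - v j.1|) Filter.atBot (nhds 0) ∧
    Filter.Tendsto (fun i : ℤ => ∑' j : Erow n i, |u j.1 - w j.1|) Filter.atTop (nhds 0)}

noncomputable def c2 {n r : ℕ} (s : (B0 n r → ℝ) → ℝ) (v w : Lat n → ℝ) : EReal :=
  sInf (J2 s v '' Gamma2 v w)

def M2 {n r : ℕ} (s : (B0 n r → ℝ) → ℝ) (v w : Lat n → ℝ) : Set (Lat n → ℝ) :=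
  {u ∈ Gamma2 v w | J2 s v u = c2 s v w}



/-! ### Auxiliary development -/

section Aux

variable {n r : ℕ}

lemma latE_apply {n : ℕ} (m : ℕ) (k : Fin n) :
    latE (n := n) m k = if (k : ℕ) = m then 1 else 0 := rfl

lemma latE_apply_ne {n : ℕ} {m k : Fin n} (h : k ≠ m) : latE (n := n) (m : ℕ) k = 0 := by
  simp [latE, Fin.val_eq_val, h]

lemma latE_apply_self {n : ℕ} (m : Fin n) : latE (n := n) (m : ℕ) m = 1 := by
  simp [latE]

lemma latNorm_zero {n : ℕ} : latNorm (0 : Lat n) = 0 := by simp [latNorm]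

lemma latNorm_eq_zero {n : ℕ} {i : Lat n} (h : latNorm i = 0) : i = 0 := by
  funext k
  have := Finset.sum_eq_zero_iff.1 h k (Finset.mem_univ k)
  simp only [Pi.zero_apply]
  omega

lemma latNorm_neg {n : ℕ} (i : Lat n) : latNorm (-i) = latNorm i := by
  simp [latNorm]

lemma latNorm_latE {n : ℕ} (m : Fin n) : latNorm (latE (n := n) (m : ℕ)) = 1 := by
  classical
  rw [latNorm, Finset.sum_eq_single m]
  · simp [latE_apply_self]
  · intro b _ hb; simp [latE_apply_ne hb]
  · intro h; exact absurd (Finset.mem_univ m) h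

lemma latNorm_add_latE {n : ℕ} (v : Lat n) (k : Fin n) :
    latNorm (v + latE (k : ℕ))
      = (∑ m ∈ Finset.univ.erase k, (v m).natAbs) + (v k + 1).natAbs := by
  classical
  rw [latNorm, ← Finset.sum_erase_add _ _ (Finset.mem_univ k)]
  congr 1
  · exact Finset.sum_congr rfl fun m hm => by
      simp [latE_apply_ne (Finset.mem_erase.1 hm).1]
  · simp [latE_apply_self]

lemma latNorm_erase {n : ℕ} (v : Lat n) (k : Fin n) :
    latNorm v = (∑ m ∈ Finset.univ.erase k, (v m).natAbs) + (v k).natAbs := by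
  rw [latNorm, ← Finset.sum_erase_add _ _ (Finset.mem_univ k)]

lemma latNorm_sub_latE {n : ℕ} (v : Lat n) (k : Fin n) :
    latNorm (v - latE (k : ℕ))
      = (∑ m ∈ Finset.univ.erase k, (v m).natAbs) + (v k - 1).natAbs := by
  classical
  rw [latNorm, ← Finset.sum_erase_add _ _ (Finset.mem_univ k)]
  congr 1
  · exact Finset.sum_congr rfl fun m hm => by
      simp [latE_apply_ne (Finset.mem_erase.1 hm).1]
  · simp [latE_apply_self]

/-- Qualitative walking lemma: a property preserved by unit steps holds everywhere. -/
lemma lat_walk {n : ℕ} {P : Lat n → Prop}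
    (hstep : ∀ j : Lat n, P j → ∀ k : Fin n, P (j + latE (k : ℕ)) ∧ P (j - latE (k : ℕ)))
    {i₀ : Lat n} (h0 : P i₀) : ∀ i, P i := by
  classical
  suffices h : ∀ N : ℕ, ∀ v : Lat n, latNorm v ≤ N → P (i₀ + v) by
    intro i
    have := h (latNorm (i - i₀)) (i - i₀) le_rfl
    simpa using this
  intro N
  induction N with
  | zero =>
    intro v hv
    have : v = 0 := latNorm_eq_zero (Nat.le_zero.1 hv)
    simpa [this] using h0
  | succ N ih =>
    intro v hv
    by_cases hle : latNorm v ≤ N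
    · exact ih v hle
    have hvne : latNorm v ≠ 0 := by omega
    have : ∃ k, v k ≠ 0 := by
      by_contra h
      push_neg at h
      exact hvne (by simp [latNorm, h])
    obtain ⟨k, hk⟩ := this
    rcases hk.lt_or_gt with hneg | hpos
    · have hnorm : latNorm (v + latE (k : ℕ)) ≤ N := by
        rw [latNorm_add_latE]
        rw [latNorm_erase v k] at hv
        omega
      have hP := (hstep _ (ih _ hnorm) k).2
      have he : i₀ + (v + latE (k : ℕ)) - latE (k : ℕ) = i₀ + v := by abel
      rwa [he] at hP
    · have hnorm : latNorm (v - latE (k : ℕ)) ≤ N := by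
        rw [latNorm_sub_latE]
        rw [latNorm_erase v k] at hv
        omega
      have hP := (hstep _ (ih _ hnorm) k).1
      have he : i₀ + (v - latE (k : ℕ)) + latE (k : ℕ) = i₀ + v := by abel
      rwa [he] at hP

/-- Quantitative walking lemma. -/
lemma lat_walk_bound {n : ℕ} {u : Lat n → ℝ} {R : ℝ} (hR : 0 ≤ R)
    (hstep : ∀ j : Lat n, ∀ k : Fin n, |u (j + latE (k : ℕ)) - u j| ≤ R) :
    ∀ N : ℕ, ∀ v : Lat n, latNorm v ≤ N → |u v - u 0| ≤ R * N := by
  intro N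
  induction N with
  | zero =>
    intro v hv
    have : v = 0 := latNorm_eq_zero (Nat.le_zero.1 hv)
    simp [this]
  | succ N ih =>
    intro v hv
    rw [Nat.cast_add, Nat.cast_one]
    by_cases hle : latNorm v ≤ N
    · calc |u v - u 0| ≤ R * N := ih v hle
        _ ≤ R * (N + 1) := by nlinarith
    have hvne : latNorm v ≠ 0 := by omega
    have : ∃ k, v k ≠ 0 := by
      by_contra h
      push_neg at h
      exact hvne (by simp [latNorm, h])
    obtain ⟨k, hk⟩ := this
    rcases hk.lt_or_gt with hneg | hpos
    · set v' := v + latE (k : ℕ) with hv'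
      have hnorm : latNorm v' ≤ N := by
        rw [hv', latNorm_add_latE]
        rw [latNorm_erase v k] at hv
        omega
      have h1 : |u v' - u 0| ≤ R * N := ih v' hnorm
      have h2 : |u v' - u v| ≤ R := hstep v k
      calc |u v - u 0| ≤ |u v - u v'| + |u v' - u 0| := abs_sub_le _ _ _
        _ ≤ R + R * N := add_le_add (by rwa [abs_sub_comm]) h1
        _ = R * (N + 1) := by ring
    · set v' := v - latE (k : ℕ) with hv'
      have hvv : v' + latE (k : ℕ) = v := by rw [hv']; abel
      have hnorm : latNorm v' ≤ N := by
        rw [hv', latNorm_sub_latE]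
        rw [latNorm_erase v k] at hv
        omega
      have h1 : |u v' - u 0| ≤ R * N := ih v' hnorm
      have h2 : |u v - u v'| ≤ R := by
        have := hstep v' k
        rwa [hvv] at this
      calc |u v - u 0| ≤ |u v - u v'| + |u v' - u 0| := abs_sub_le _ _ _
        _ ≤ R + R * N := add_le_add h2 h1
        _ = R * (N + 1) := by ring

/-- Fully periodic configurations are constant. -/
lemma fullyPeriodic_const {n : ℕ} {u : Lat n → ℝ} (hu : fullyPeriodic u) (i : Lat n) :
    u i = u 0 := by
  refine lat_walk (P := fun j => u j = u 0) ?_ rfl i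
  intro j hj k
  refine ⟨?_, ?_⟩
  · show u (j + latE (k : ℕ)) = u 0
    rw [hu j k]; exact hj
  · show u (j - latE (k : ℕ)) = u 0
    have h2 := hu (j - latE (k : ℕ)) k
    have he : j - latE (k : ℕ) + latE (k : ℕ) = j := by abel
    rw [he] at h2
    rw [← h2]; exact hj


/-! ### Reduction mod `l` and periodicity -/

/-- Componentwise reduction mod `l`. -/
def redl {n : ℕ} (l : Fin n → ℕ) (i : Lat n) : Lat n := fun k => i k % (l k : ℤ)

/-- The fundamental box for the period vector `l`. -/
noncomputable def Box {n : ℕ} (l : Fin n → ℕ) : Finset (Lat n) :=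
  Fintype.piFinset fun k => Finset.Ico (0 : ℤ) (l k)

/-- `l`-periodicity for a real-valued function on the lattice. -/
def LPer {n : ℕ} (l : Fin n → ℕ) (f : Lat n → ℝ) : Prop :=
  ∀ i : Lat n, ∀ k : Fin n, f (i + (l k : ℤ) • latE (k : ℕ)) = f i

lemma mem_Box {n : ℕ} {l : Fin n → ℕ} {i : Lat n} :
    i ∈ Box l ↔ ∀ k, 0 ≤ i k ∧ i k < l k := by
  simp [Box, Fintype.mem_piFinset, Finset.mem_Ico]

lemma redl_mem_Box {n : ℕ} {l : Fin n → ℕ} (hl : ∀ k, 0 < l k) (i : Lat n) :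
    redl l i ∈ Box l := by
  rw [mem_Box]
  intro k
  have h1 : ((l k : ℤ)) ≠ 0 := by exact_mod_cast (hl k).ne'
  have h2 : (0 : ℤ) < (l k : ℤ) := by exact_mod_cast hl k
  exact ⟨Int.emod_nonneg _ h1, Int.emod_lt_of_pos _ h2⟩

lemma redl_eq_of_mem {n : ℕ} {l : Fin n → ℕ} {i : Lat n} (h : i ∈ Box l) :
    redl l i = i := by
  funext k
  exact Int.emod_eq_of_lt (mem_Box.1 h k).1 (mem_Box.1 h k).2

lemma redl_add_right {n : ℕ} (l : Fin n → ℕ) (i j : Lat n) :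
    redl l (redl l i + j) = redl l (i + j) := by
  funext k
  show (i k % (l k : ℤ) + j k) % (l k : ℤ) = (i k + j k) % (l k : ℤ)
  rw [Int.add_emod, Int.emod_emod_of_dvd _ dvd_rfl, ← Int.add_emod]

lemma redl_redl {n : ℕ} (l : Fin n → ℕ) (i : Lat n) : redl l (redl l i) = redl l i := by
  funext k
  exact Int.emod_emod_of_dvd _ dvd_rfl

lemma redl_add_period {n : ℕ} (l : Fin n → ℕ) (i : Lat n) (k : Fin n) :
    redl l (i + (l k : ℤ) • latE (k : ℕ)) = redl l i := by
  funext m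
  show (i m + (l k : ℤ) * latE (k : ℕ) m) % (l m : ℤ) = i m % (l m : ℤ)
  by_cases hm : m = k
  · subst hm
    rw [latE_apply_self, mul_one]
    have : i m + (l m : ℤ) = i m + (l m : ℤ) * 1 := by ring
    rw [this, Int.add_mul_emod_self_left]
  · rw [latE_apply_ne hm, mul_zero, add_zero]

lemma LPer.int {n : ℕ} {l : Fin n → ℕ} {f : Lat n → ℝ} (hf : LPer l f)
    (i : Lat n) (k : Fin n) (m : ℤ) : f (i + (m * l k) • latE (k : ℕ)) = f i := by
  induction m using Int.induction_on with
  | zero => simp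
  | succ m ih =>
    have he : i + ((m + 1 : ℤ) * l k) • latE (k : ℕ)
        = (i + ((m : ℤ) * l k) • latE (k : ℕ)) + (l k : ℤ) • latE (k : ℕ) := by
      have : ((m + 1 : ℤ) * l k) = (m : ℤ) * l k + (l k : ℤ) := by ring
      rw [this, add_smul]; abel
    rw [he, hf _ k, ih]
  | pred m ih =>
    have he : (i + ((-m - 1 : ℤ) * l k) • latE (k : ℕ)) + (l k : ℤ) • latE (k : ℕ)
        = i + ((-m : ℤ) * l k) • latE (k : ℕ) := by
      have : ((-m : ℤ) * l k) = (-m - 1 : ℤ) * l k + (l k : ℤ) := by ring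
      rw [this, add_smul]; abel
    have h3 := hf (i + ((-m - 1 : ℤ) * l k) • latE (k : ℕ)) k
    rw [he] at h3
    rw [← h3]
    exact ih

lemma LPer.congr {n : ℕ} {l : Fin n → ℕ} {f : Lat n → ℝ} (hf : LPer l f)
    (j : Lat n) : ∀ i : Lat n, (∀ k, (l k : ℤ) ∣ (i k - j k)) → f i = f j := by
  classical
  suffices h : ∀ A : Finset (Fin n), ∀ i : Lat n,
      (∀ k, (l k : ℤ) ∣ (i k - j k)) → (∀ k ∉ A, i k = j k) → f i = f j by
    intro i hi
    exact h Finset.univ i hi (fun k hk => absurd (Finset.mem_univ k) hk)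
  intro A
  induction A using Finset.induction_on with
  | empty =>
    intro i _ h2
    have : i = j := funext fun k => h2 k (Finset.notMem_empty k)
    rw [this]
  | insert k A hk =>
    intro i h1 h2
    obtain ⟨d, hd⟩ := h1 k
    set i' := Function.update i k (j k) with hi'
    have hieq : i = i' + (d * l k) • latE (k : ℕ) := by
      funext m
      show i m = i' m + (d * (l k : ℤ)) * latE (k : ℕ) m
      by_cases hm : m = k
      · subst hm
        rw [hi']
        simp only [Function.update_self, latE_apply_self, mul_one]
        rw [mul_comm d]
        omega
      · rw [hi', Function.update_of_ne hm, latE_apply_ne hm, mul_zero, add_zero]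
    have step : f i = f i' := by
      rw [hieq]
      exact hf.int i' k d
    rename_i ih
    rw [step]
    refine ih i' ?_ ?_
    · intro m
      by_cases hm : m = k
      · subst hm; simp [hi']
      · rw [hi', Function.update_of_ne hm]; exact h1 m
    · intro m hm
      by_cases hmk : m = k
      · subst hmk; simp [hi']
      · rw [hi', Function.update_of_ne hmk]
        exact h2 m (by simp [hmk, hm])

lemma LPer.redl_eq {n : ℕ} {l : Fin n → ℕ} {f : Lat n → ℝ} (hf : LPer l f) (i : Lat n) :
    f (redl l i) = f i := by
  refine hf.congr i (redl l i) (fun k => ⟨-(i k / l k), ?_⟩)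
  show i k % (l k : ℤ) - i k = (l k : ℤ) * -(i k / (l k : ℤ))
  rw [Int.emod_def]
  ring

/-- A sum of an `l`-periodic function over a shifted box is shift-invariant. -/
lemma sum_Box_shift {n : ℕ} {l : Fin n → ℕ} (hl : ∀ k, 0 < l k) {f : Lat n → ℝ}
    (hf : LPer l f) (a : Lat n) :
    ∑ i ∈ Box l, f (i + a) = ∑ i ∈ Box l, f i := by
  refine Finset.sum_nbij' (fun i => redl l (i + a)) (fun i => redl l (i - a))
    (fun i _ => redl_mem_Box hl _) (fun i _ => redl_mem_Box hl _) ?_ ?_ ?_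
  · intro i hi
    have : redl l (redl l (i + a) + (-a)) = redl l ((i + a) + (-a)) := redl_add_right l _ _
    simp only [add_neg_cancel_right] at this
    calc redl l (redl l (i + a) - a) = redl l i := by
          rw [sub_eq_add_neg]; exact this
      _ = i := redl_eq_of_mem hi
  · intro i hi
    show redl l (redl l (i - a) + a) = i
    have h4 : redl l (redl l (i - a) + a) = redl l ((i - a) + a) := redl_add_right l _ _
    rw [sub_add_cancel] at h4
    rw [h4, redl_eq_of_mem hi]
  · intro i _
    exact (hf.redl_eq (i + a)).symm


/-! ### Calculus glue -/

lemma hasDerivAt_update {n r : ℕ} (x : B0 n r → ℝ) (k : B0 n r) (t₀ : ℝ) :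
    HasDerivAt (fun t => Function.update x k t) (Pi.single k (1 : ℝ)) t₀ := by
  classical
  have h : (fun t => Function.update x k t)
      = fun t => x + (t - x k) • (Pi.single k (1 : ℝ) : B0 n r → ℝ) := by
    funext t m
    by_cases hm : m = k
    · subst hm; simp
    · simp [Function.update_of_ne hm, Pi.single_eq_of_ne hm]
  rw [h]
  have h2 := ((hasDerivAt_id t₀).sub_const (x k)).smul_const
    (Pi.single k (1 : ℝ) : B0 n r → ℝ)
  simpa using h2.const_add x

variable {n r : ℕ} {s : (B0 n r → ℝ) → ℝ}

lemma pder_eq_fderiv (hd : Differentiable ℝ s) (k : B0 n r) (x : B0 n r → ℝ) :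
    pder s k x = fderiv ℝ s x (Pi.single k 1) := by
  have h1 : HasDerivAt (fun t => s (Function.update x k t))
      (fderiv ℝ s (Function.update x k (x k)) (Pi.single k 1)) (x k) :=
    (hd _).hasFDerivAt.comp_hasDerivAt _ (hasDerivAt_update x k (x k))
  rw [Function.update_eq_self] at h1
  exact h1.deriv

lemma contDiff_fderiv (hs2 : ContDiff ℝ 2 s) : ContDiff ℝ 1 (fderiv ℝ s) :=
  hs2.fderiv_right (by norm_num)

lemma hasDerivAt_fderiv_apply (hs2 : ContDiff ℝ 2 s) {γ : ℝ → (B0 n r → ℝ)}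
    {c : B0 n r → ℝ} {t₀ : ℝ} (hγ : HasDerivAt γ c t₀) (d : B0 n r → ℝ) :
    HasDerivAt (fun t => fderiv ℝ s (γ t) d)
      (fderiv ℝ (fderiv ℝ s) (γ t₀) c d) t₀ := by
  have hf1 : ContDiff ℝ 1 (fderiv ℝ s) := contDiff_fderiv hs2
  have h2 : HasFDerivAt (fderiv ℝ s) (fderiv ℝ (fderiv ℝ s) (γ t₀)) (γ t₀) :=
    (hf1.differentiable one_ne_zero (γ t₀)).hasFDerivAt
  have h3 : HasFDerivAt (fun y => fderiv ℝ s y d)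
      ((ContinuousLinearMap.apply ℝ ℝ d).comp (fderiv ℝ (fderiv ℝ s) (γ t₀))) (γ t₀) :=
    ((ContinuousLinearMap.apply ℝ ℝ d).hasFDerivAt).comp (γ t₀) h2
  have h4 := h3.comp_hasDerivAt t₀ hγ
  exact h4

lemma pder_pder_eq (hs2 : ContDiff ℝ 2 s) (j k : B0 n r) (x : B0 n r → ℝ) :
    pder (pder s j) k x = fderiv ℝ (fderiv ℝ s) x (Pi.single k 1) (Pi.single j 1) := by
  have hd : Differentiable ℝ s := hs2.differentiable (by norm_num)
  have hfun : pder s j = fun y => fderiv ℝ s y (Pi.single j 1) :=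
    funext fun y => pder_eq_fderiv hd j y
  have h1 : HasDerivAt (fun t => fderiv ℝ s (Function.update x k t) (Pi.single j 1))
      (fderiv ℝ (fderiv ℝ s) (Function.update x k (x k)) (Pi.single k 1) (Pi.single j 1))
      (x k) :=
    hasDerivAt_fderiv_apply hs2 (hasDerivAt_update x k (x k)) _
  rw [Function.update_eq_self] at h1
  show deriv (fun t => pder s j (Function.update x k t)) (x k) = _
  rw [hfun]
  exact h1.deriv

lemma fderiv2_symm (hs2 : ContDiff ℝ 2 s) (x a b : B0 n r → ℝ) :
    fderiv ℝ (fderiv ℝ s) x a b = fderiv ℝ (fderiv ℝ s) x b a :=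
  second_derivative_symmetric (fun y => (hs2.differentiable (by norm_num) y).hasFDerivAt)
    ((contDiff_fderiv hs2).differentiable one_ne_zero x).hasFDerivAt a b

lemma clm2_expand {ι : Type*} [Fintype ι] [DecidableEq ι]
    (B : (ι → ℝ) →L[ℝ] (ι → ℝ) →L[ℝ] ℝ) (c d : ι → ℝ) :
    B c d = ∑ k, ∑ m, c k * d m * B (Pi.single k 1) (Pi.single m 1) := by
  have hsingle : ∀ (e : ι → ℝ) (k : ι),
      Pi.single k (e k) = e k • (Pi.single k (1 : ℝ) : ι → ℝ) :=
    fun e k => by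
      funext m
      by_cases hm : m = k
      · subst hm; simp
      · simp [Pi.single_eq_of_ne hm]
  have hc : c = ∑ k, c k • (Pi.single k (1 : ℝ) : ι → ℝ) := by
    conv_lhs => rw [← Finset.univ_sum_single c]
    exact Finset.sum_congr rfl fun k _ => hsingle c k
  have hd : d = ∑ m, d m • (Pi.single m (1 : ℝ) : ι → ℝ) := by
    conv_lhs => rw [← Finset.univ_sum_single d]
    exact Finset.sum_congr rfl fun m _ => hsingle d m
  have hBd : ∀ k : ι, B (Pi.single k 1) d = ∑ m, d m * B (Pi.single k 1) (Pi.single m 1) := by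
    intro k
    conv_lhs => rw [hd]
    rw [map_sum]
    exact Finset.sum_congr rfl fun m _ => by rw [map_smul, smul_eq_mul]
  conv_lhs => rw [hc]
  rw [map_sum, ContinuousLinearMap.sum_apply]
  refine Finset.sum_congr rfl fun k _ => ?_
  rw [map_smul, ContinuousLinearMap.smul_apply, smul_eq_mul, hBd k, Finset.mul_sum]
  exact Finset.sum_congr rfl fun m _ => by ring

lemma pder_antitone_step (hs2 : ContDiff ℝ 2 s)
    (hcross : ∀ k j : B0 n r, k ≠ j → ∀ x, pder (pder s j) k x ≤ 0)
    (j k : B0 n r) (hkj : k ≠ j) (c : B0 n r → ℝ) :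
    Antitone (fun t => pder s j (Function.update c k t)) := by
  have hd : Differentiable ℝ s := hs2.differentiable (by norm_num)
  have hfun : pder s j = fun y => fderiv ℝ s y (Pi.single j 1) :=
    funext fun y => pder_eq_fderiv hd j y
  refine antitone_of_deriv_nonpos ?_ ?_
  · rw [hfun]
    intro t
    exact (hasDerivAt_fderiv_apply hs2 (hasDerivAt_update c k t) _).differentiableAt
  · intro t
    have he : pder (pder s j) k (Function.update c k t)
        = deriv (fun τ => pder s j (Function.update c k τ)) t := by
      show deriv _ _ = _
      simp only [Function.update_idem, Function.update_self]
    rw [← he]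
    exact hcross k j hkj _

lemma pder_le_of_le (hs2 : ContDiff ℝ 2 s)
    (hcross : ∀ k j : B0 n r, k ≠ j → ∀ x, pder (pder s j) k x ≤ 0)
    (j : B0 n r) {a b : B0 n r → ℝ} (hab : a ≤ b) (hj : a j = b j) :
    pder s j b ≤ pder s j a := by
  classical
  suffices h : ∀ A : Finset (B0 n r), pder s j (A.piecewise b a) ≤ pder s j a by
    have h2 := h Finset.univ
    rwa [Finset.piecewise_univ] at h2
  intro A
  induction A using Finset.induction_on with
  | empty => rw [Finset.piecewise_empty]
  | insert k A hkA ih =>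
    rw [Finset.piecewise_insert]
    have hck : (A.piecewise b a) k = a k := Finset.piecewise_eq_of_notMem _ _ _ hkA
    by_cases hkj : k = j
    · subst hkj
      have hbk : b k = a k := (hj.symm : b k = a k)
      rw [hbk, ← hck, Function.update_eq_self]
      exact ih
    · have hmono := pder_antitone_step hs2 hcross j k hkj (A.piecewise b a)
      have h1 : pder s j (Function.update (A.piecewise b a) k (b k))
          ≤ pder s j (Function.update (A.piecewise b a) k (a k)) := hmono (hab k)
      rw [← hck, Function.update_eq_self] at h1
      exact le_trans h1 ih

lemma inc_le_inc (hs2 : ContDiff ℝ 2 s)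
    (hcross : ∀ k j : B0 n r, k ≠ j → ∀ x, pder (pder s j) k x ≤ 0)
    (i : B0 n r) {a b : B0 n r → ℝ} (hab : a ≤ b) {t₀ t₁ : ℝ} (ht : t₀ ≤ t₁) :
    s (Function.update b i t₁) - s (Function.update b i t₀)
      ≤ s (Function.update a i t₁) - s (Function.update a i t₀) := by
  have hd : Differentiable ℝ s := hs2.differentiable (by norm_num)
  have hder : ∀ t, HasDerivAt (fun τ => s (Function.update b i τ) - s (Function.update a i τ))
      (fderiv ℝ s (Function.update b i t) (Pi.single i 1)
        - fderiv ℝ s (Function.update a i t) (Pi.single i 1)) t := fun t =>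
    ((hd _).hasFDerivAt.comp_hasDerivAt t (hasDerivAt_update b i t)).sub
      ((hd _).hasFDerivAt.comp_hasDerivAt t (hasDerivAt_update a i t))
  have hanti : Antitone (fun τ => s (Function.update b i τ) - s (Function.update a i τ)) := by
    refine antitone_of_deriv_nonpos (fun t => (hder t).differentiableAt) (fun t => ?_)
    rw [(hder t).deriv]
    rw [← pder_eq_fderiv hd i, ← pder_eq_fderiv hd i]
    have hab' : Function.update a i t ≤ Function.update b i t := by
      intro m
      by_cases hm : m = i
      · subst hm; simp
      · simp only [Function.update_of_ne hm]; exact hab m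
    have heq : Function.update a i t i = Function.update b i t i := by simp
    have h2 := pder_le_of_le hs2 hcross i hab' heq
    linarith
  have h3 := hanti ht
  simp only at h3
  linarith

lemma submodular (hs2 : ContDiff ℝ 2 s)
    (hcross : ∀ k j : B0 n r, k ≠ j → ∀ x, pder (pder s j) k x ≤ 0)
    (x y : B0 n r → ℝ) :
    s (fun i => min (x i) (y i)) + s (fun i => max (x i) (y i)) ≤ s x + s y := by
  classical
  suffices h : ∀ A : Finset (B0 n r), ∀ x y : B0 n r → ℝ, (∀ i, y i < x i → i ∈ A) →
      s (fun i => min (x i) (y i)) + s (fun i => max (x i) (y i)) ≤ s x + s y by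
    exact h Finset.univ x y (fun i _ => Finset.mem_univ i)
  intro A
  induction A using Finset.induction_on with
  | empty =>
    intro x y hxy
    have hxle : x ≤ y := fun i => le_of_not_gt (fun h => (Finset.notMem_empty i) (hxy i h))
    have h1 : (fun i => min (x i) (y i)) = x := funext fun i => min_eq_left (hxle i)
    have h2 : (fun i => max (x i) (y i)) = y := funext fun i => max_eq_right (hxle i)
    rw [h1, h2]
  | insert j A hkA ih =>
    intro x y hxy
    by_cases hj : x j ≤ y j
    · refine ih x y (fun i hi => ?_)
      rcases Finset.mem_insert.1 (hxy i hi) with h | h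
      · subst h; exact absurd hi (not_lt.2 hj)
      · exact h
    · push_neg at hj
      set x' := Function.update x j (y j) with hx'
      have hcond : ∀ i, y i < x' i → i ∈ A := by
        intro i hi
        by_cases hij : i = j
        · subst hij; rw [hx', Function.update_self] at hi; exact absurd hi (lt_irrefl _)
        · rw [hx', Function.update_of_ne hij] at hi
          rcases Finset.mem_insert.1 (hxy i hi) with h | h
          · exact absurd h hij
          · exact h
      have IH := ih x' y hcond
      have hmin : (fun i => min (x' i) (y i)) = (fun i => min (x i) (y i)) := by
        funext i
        by_cases hij : i = j
        · subst hij
          rw [hx', Function.update_self, min_self]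
          exact (min_eq_right (le_of_lt hj)).symm
        · rw [hx', Function.update_of_ne hij]
      have hxx : x = Function.update x' j (x j) := by
        funext i
        by_cases hij : i = j
        · subst hij; rw [Function.update_self]
        · rw [Function.update_of_ne hij, hx', Function.update_of_ne hij]
      have hx'e : x' = Function.update x' j (y j) := by
        funext i
        by_cases hij : i = j
        · subst hij; rw [Function.update_self, hx', Function.update_self]
        · rw [Function.update_of_ne hij]
      have hmax1 : (fun i => max (x i) (y i))
          = Function.update (fun i => max (x' i) (y i)) j (x j) := by
        funext i
        by_cases hij : i = j
        · subst hij; rw [Function.update_self]; exact max_eq_left (le_of_lt hj)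
        · rw [Function.update_of_ne hij, hx', Function.update_of_ne hij]
      have hmax2 : (fun i => max (x' i) (y i))
          = Function.update (fun i => max (x' i) (y i)) j (y j) := by
        funext i
        by_cases hij : i = j
        · subst hij
          rw [Function.update_self, hx', Function.update_self, max_self]
        · rw [Function.update_of_ne hij]
      have hL1 := inc_le_inc hs2 hcross j (a := x') (b := fun i => max (x' i) (y i))
        (fun i => le_max_left _ _) (le_of_lt hj)
      rw [← hmax1, ← hmax2, ← hxx, ← hx'e] at hL1
      rw [hmin] at IH
      linarith


/-! ### The functional `J0l`: invariances, continuity, existence of minimizers -/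

/-- The local configuration of `u` around the site `i`. -/
def Lcfg {n r : ℕ} (i : Lat n) (u : Lat n → ℝ) : B0 n r → ℝ := fun k => u (i + k.1)

lemma Spot_eq_Lcfg {n r : ℕ} (s : (B0 n r → ℝ) → ℝ) (i : Lat n) (u : Lat n → ℝ) :
    Spot s i u = s (Lcfg i u) := rfl

lemma J0l_eq_sum {n r : ℕ} (s : (B0 n r → ℝ) → ℝ) (l : Fin n → ℕ) (u : Lat n → ℝ) :
    J0l s l u = ∑ i ∈ Box l, Spot s i u := rfl

lemma mem_GammaPer {n : ℕ} {l : Fin n → ℕ} {u : Lat n → ℝ} :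
    u ∈ GammaPer l ↔ LPer l u := Iff.rfl

lemma LPer.spot {n r : ℕ} (s : (B0 n r → ℝ) → ℝ) {l : Fin n → ℕ} {u : Lat n → ℝ}
    (hu : LPer l u) : LPer l (fun j => Spot s j u) := by
  intro j k
  show s _ = s _
  congr 1
  funext m
  show u (j + (l k : ℤ) • latE (k : ℕ) + m.1) = u (j + m.1)
  rw [add_right_comm]
  exact hu (j + m.1) k

lemma Spot_shift {n r : ℕ} (s : (B0 n r → ℝ) → ℝ) (j a : Lat n) (u : Lat n → ℝ) :
    Spot s j (fun i => u (i + a)) = Spot s (j + a) u := by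
  show s _ = s _
  congr 1
  funext m
  show u (j + m.1 + a) = u (j + a + m.1)
  rw [add_right_comm]

lemma GammaPer.shift {n : ℕ} {l : Fin n → ℕ} {u : Lat n → ℝ} (hu : u ∈ GammaPer l)
    (a : Lat n) : (fun i => u (i + a)) ∈ GammaPer l := by
  intro i k
  show u (i + (l k : ℤ) • latE (k : ℕ) + a) = u (i + a)
  rw [add_right_comm]
  exact hu (i + a) k

lemma J0l_shift {n r : ℕ} (s : (B0 n r → ℝ) → ℝ) {l : Fin n → ℕ} (hl : ∀ k, 0 < l k)
    {u : Lat n → ℝ} (hu : u ∈ GammaPer l) (a : Lat n) :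
    J0l s l (fun i => u (i + a)) = J0l s l u := by
  rw [J0l_eq_sum, J0l_eq_sum]
  calc ∑ i ∈ Box l, Spot s i (fun i => u (i + a))
      = ∑ i ∈ Box l, Spot s (i + a) u :=
        Finset.sum_congr rfl fun i _ => Spot_shift s i a u
    _ = ∑ i ∈ Box l, Spot s i u := sum_Box_shift hl (LPer.spot s hu) a

lemma s_add_int {n r : ℕ} {s : (B0 n r → ℝ) → ℝ}
    (hper : ∀ x : B0 n r → ℝ, s (fun k => x k + 1) = s x) (m : ℤ) (x : B0 n r → ℝ) :
    s (fun k => x k + (m : ℝ)) = s x := by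
  induction m using Int.induction_on with
  | zero => simp
  | succ m ih =>
    have h1 := hper (fun k => x k + ((m : ℤ) : ℝ))
    have h2 : (fun k : B0 n r => x k + (((m : ℤ) + 1 : ℤ) : ℝ))
        = fun k => x k + ((m : ℤ) : ℝ) + 1 := by
      funext k; push_cast; ring
    rw [h2, h1, ih]
  | pred m ih =>
    have h1 := hper (fun k => x k + ((-(m : ℤ) - 1 : ℤ) : ℝ))
    have h2 : (fun k : B0 n r => x k + ((-(m : ℤ) - 1 : ℤ) : ℝ) + 1)
        = fun k => x k + ((-(m : ℤ) : ℤ) : ℝ) := by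
      funext k; push_cast; ring
    rw [h2] at h1
    rw [← h1]
    exact ih

lemma Spot_add_int {n r : ℕ} {s : (B0 n r → ℝ) → ℝ}
    (hper : ∀ x : B0 n r → ℝ, s (fun k => x k + 1) = s x) (i : Lat n) (u : Lat n → ℝ)
    (m : ℤ) : Spot s i (fun j => u j + (m : ℝ)) = Spot s i u :=
  s_add_int hper m (Lcfg i u)

lemma J0l_add_int {n r : ℕ} {s : (B0 n r → ℝ) → ℝ}
    (hper : ∀ x : B0 n r → ℝ, s (fun k => x k + 1) = s x) (l : Fin n → ℕ) (u : Lat n → ℝ)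
    (m : ℤ) : J0l s l (fun j => u j + (m : ℝ)) = J0l s l u := by
  rw [J0l_eq_sum, J0l_eq_sum]
  exact Finset.sum_congr rfl fun i _ => Spot_add_int hper i u m

lemma GammaPer.add_const {n : ℕ} {l : Fin n → ℕ} {u : Lat n → ℝ} (hu : u ∈ GammaPer l)
    (c : ℝ) : (fun i => u i + c) ∈ GammaPer l := by
  intro i k
  show u (i + (l k : ℤ) • latE (k : ℕ)) + c = u i + c
  rw [hu i k]

lemma zero_mem_GammaPer {n : ℕ} (l : Fin n → ℕ) : (0 : Lat n → ℝ) ∈ GammaPer l :=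
  fun _ _ => rfl

lemma zero_mem_Box {n : ℕ} {l : Fin n → ℕ} (hl : ∀ k, 0 < l k) : (0 : Lat n) ∈ Box l :=
  mem_Box.2 fun k => by
    simp only [Pi.zero_apply]
    exact ⟨le_rfl, by exact_mod_cast hl k⟩

lemma continuous_J0l {n r : ℕ} {s : (B0 n r → ℝ) → ℝ} (hc : Continuous s) (l : Fin n → ℕ) :
    Continuous (J0l s l) := by
  have : J0l s l = fun u => ∑ i ∈ Box l, Spot s i u := rfl
  rw [this]
  refine continuous_finset_sum _ (fun i _ => ?_)
  exact hc.comp (continuous_pi fun k => continuous_apply (i + k.1))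

lemma isClosed_GammaPer {n : ℕ} (l : Fin n → ℕ) : IsClosed (GammaPer (n := n) l) := by
  have h : GammaPer (n := n) l = ⋂ (i : Lat n), ⋂ (k : Fin n),
      {u : Lat n → ℝ | u (i + (l k : ℤ) • latE (k : ℕ)) = u i} := by
    ext u
    simp only [GammaPer, Set.mem_setOf_eq, Set.mem_iInter]
  rw [h]
  exact isClosed_iInter fun i => isClosed_iInter fun k =>
    isClosed_eq (continuous_apply _) (continuous_apply _)

/-- Existence of a global minimizer of `J0l` over `GammaPer l`. -/
theorem exists_J0l_min {n r : ℕ} {s : (B0 n r → ℝ) → ℝ} (hs : IsPotential n r s)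
    (hr : 1 ≤ r) {l : Fin n → ℕ} (hl : ∀ k, 0 < l k) :
    ∃ u ∈ GammaPer (n := n) l, ∀ v ∈ GammaPer l, J0l s l u ≤ J0l s l v := by
  classical
  obtain ⟨M, hM⟩ := hs.bddBelow
  set N := (Box (n := n) l).card with hN
  have hN1 : 1 ≤ N := Finset.card_pos.2 ⟨0, zero_mem_Box hl⟩
  set c₁ : ℝ := J0l s l 0 - ((N : ℝ) - 1) * M + 1 with hc₁
  -- coercivity radii
  have hcoer : ∀ m : Fin n, ∃ R : ℝ, ∀ x : B0 n r → ℝ,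
      R ≤ |x (B0.zero n r) - x ⟨latE (m : ℕ), by rw [latNorm_latE]; omega⟩| → c₁ ≤ s x := by
    intro m
    refine hs.coercive (B0.zero n r) ⟨latE (m : ℕ), by rw [latNorm_latE]; omega⟩ ?_ c₁
    show latNorm ((0 : Lat n) - latE (m : ℕ)) = 1
    rw [zero_sub, latNorm_neg, latNorm_latE]
  choose Rf hRf using hcoer
  set R : ℝ := (∑ m : Fin n, |Rf m|) + 1 with hR
  have hR1 : 1 ≤ R := by
    have : (0 : ℝ) ≤ ∑ m : Fin n, |Rf m| := Finset.sum_nonneg fun m _ => abs_nonneg _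
    linarith
  have hRm : ∀ m : Fin n, Rf m ≤ R := by
    intro m
    have h1 : |Rf m| ≤ ∑ m : Fin n, |Rf m| :=
      Finset.single_le_sum (f := fun m => |Rf m|) (fun _ _ => abs_nonneg _) (Finset.mem_univ m)
    have h2 : Rf m ≤ |Rf m| := le_abs_self _
    linarith
  set D : ℕ := ∑ k : Fin n, l k with hD
  set B : ℝ := 1 + R * D with hB
  have hB0 : 0 ≤ B := by
    have : (0:ℝ) ≤ R * D := mul_nonneg (by linarith) (Nat.cast_nonneg _)
    linarith
  -- the key a priori bound
  have hbound : ∀ u ∈ GammaPer (n := n) l, J0l s l u ≤ J0l s l 0 → u 0 ∈ Set.Icc (0:ℝ) 1 →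
      ∀ i, |u i| ≤ B := by
    intro u hu hJ hu0 i
    -- each Spot is strictly below c₁
    have hspot : ∀ j : Lat n, Spot s j u < c₁ := by
      have hbox : ∀ j ∈ Box l, Spot s j u < c₁ := by
        intro j hj
        have hsum : Spot s j u + ∑ i ∈ (Box l).erase j, Spot s i u = J0l s l u := by
          rw [J0l_eq_sum]
          exact Finset.add_sum_erase (Box l) (fun i => Spot s i u) hj
        have hlow : ((Box l).erase j).card • M ≤ ∑ i ∈ (Box l).erase j, Spot s i u :=
          Finset.card_nsmul_le_sum _ _ _ (fun i _ => hM (Lcfg i u))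
        rw [Finset.card_erase_of_mem hj] at hlow
        have hcard : ((N - 1 : ℕ) : ℝ) = (N : ℝ) - 1 := by
          rw [Nat.cast_sub hN1]; norm_num
        rw [nsmul_eq_mul, hcard] at hlow
        have := hJ
        rw [hc₁]
        linarith [hsum, hlow, hJ]
      intro j
      have hper : LPer l (fun j => Spot s j u) := LPer.spot s hu
      have := hper.redl_eq j
      rw [← this]
      exact hbox _ (redl_mem_Box hl j)
    -- neighbor differences are at most R
    have hstep : ∀ j : Lat n, ∀ m : Fin n, |u (j + latE (m : ℕ)) - u j| ≤ R := by
      intro j m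
      by_contra hcon
      push_neg at hcon
      have h2 : c₁ ≤ s (Lcfg j u) := by
        refine hRf m (Lcfg j u) ?_
        show Rf m ≤ |u (j + (0 : Lat n)) - u (j + latE (m : ℕ))|
        rw [add_zero, abs_sub_comm]
        exact le_trans (hRm m) (le_of_lt hcon)
      exact absurd h2 (not_le.2 (hspot j))
    have hwalk := lat_walk_bound (u := u) (R := R) (by linarith) hstep D
    have hredl : u i = u (redl l i) := (LPer.redl_eq (mem_GammaPer.1 hu) i).symm
    have hnorm : latNorm (redl l i) ≤ D := by
      rw [latNorm, hD]
      refine Finset.sum_le_sum fun k _ => ?_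
      have h1 := (mem_Box.1 (redl_mem_Box hl i)) k
      omega
    have h3 := hwalk (redl l i) hnorm
    have h4 : |u 0| ≤ 1 := by
      rw [abs_le]
      exact ⟨by linarith [hu0.1], hu0.2⟩
    calc |u i| = |u (redl l i)| := by rw [hredl]
      _ ≤ |u (redl l i) - u 0| + |u 0| := by
          have := abs_add_le (u (redl l i) - u 0) (u 0)
          simpa using this
      _ ≤ R * D + 1 := add_le_add h3 h4
      _ = B := by rw [hB]; ring
  -- the compact set
  set K : Set (Lat n → ℝ) := (Set.univ.pi fun _ : Lat n => Set.Icc (-B) B)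
      ∩ (GammaPer l ∩ {u | J0l s l u ≤ J0l s l 0}) with hK
  have hKc : IsCompact K := by
    refine (isCompact_univ_pi fun _ => isCompact_Icc).inter_right ?_
    exact (isClosed_GammaPer l).inter
      (isClosed_le (continuous_J0l hs.smooth.continuous l) continuous_const)
  have h0K : (0 : Lat n → ℝ) ∈ K :=
    ⟨fun i _ => ⟨by simpa using hB0, by simpa using hB0⟩, zero_mem_GammaPer l,
      by show J0l s l 0 ≤ J0l s l 0; exact le_rfl⟩
  have hKne : K.Nonempty := ⟨0, h0K⟩
  obtain ⟨u₀, hu₀K, hu₀min⟩ := hKc.exists_isMinOn hKne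
    ((continuous_J0l hs.smooth.continuous l).continuousOn)
  refine ⟨u₀, hu₀K.2.1, ?_⟩
  intro v hv
  by_cases hvJ : J0l s l v ≤ J0l s l 0
  · set m : ℤ := ⌊v 0⌋ with hm
    set v' : Lat n → ℝ := fun i => v i + ((-m : ℤ) : ℝ) with hv'
    have hv'G : v' ∈ GammaPer l := GammaPer.add_const hv _
    have hv'J : J0l s l v' = J0l s l v := J0l_add_int hs.periodic l v (-m)
    have hv'0 : v' 0 ∈ Set.Icc (0:ℝ) 1 := by
      constructor
      · show 0 ≤ v 0 + ((-m : ℤ) : ℝ)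
        push_cast
        have := Int.floor_le (v 0)
        rw [hm]
        linarith
      · show v 0 + ((-m : ℤ) : ℝ) ≤ 1
        push_cast
        have := Int.lt_floor_add_one (v 0)
        rw [hm]
        linarith
    have hv'B : ∀ i, |v' i| ≤ B := hbound v' hv'G (by rw [hv'J]; exact hvJ) hv'0
    have hv'K : v' ∈ K := by
      refine ⟨?_, hv'G, by show J0l s l v' ≤ J0l s l 0; rw [hv'J]; exact hvJ⟩
      intro i _
      have := hv'B i
      rw [abs_le] at this
      exact ⟨this.1, this.2⟩
    calc J0l s l u₀ ≤ J0l s l v' := hu₀min hv'K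
      _ = J0l s l v := hv'J
  · push_neg at hvJ
    have h2 : J0l s l u₀ ≤ J0l s l 0 := hu₀min h0K
    linarith


/-! ### The directional derivative functional and strong comparison -/

/-- Indicator of the periodicity class of `c`. -/
def chiCl {n : ℕ} (l : Fin n → ℕ) (c : Lat n) : Lat n → ℝ :=
  fun i => if redl l i = redl l c then 1 else 0

lemma chiCl_mem_GammaPer {n : ℕ} (l : Fin n → ℕ) (c : Lat n) : chiCl l c ∈ GammaPer l := by
  intro i k
  show (if redl l (i + (l k : ℤ) • latE (k : ℕ)) = redl l c then (1:ℝ) else 0)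
      = (if redl l i = redl l c then (1:ℝ) else 0)
  rw [redl_add_period]

lemma GammaPer.add_smul {n : ℕ} {l : Fin n → ℕ} {u v : Lat n → ℝ} (hu : u ∈ GammaPer l)
    (hv : v ∈ GammaPer l) (t : ℝ) : u + t • v ∈ GammaPer l := by
  intro i k
  show u (i + (l k : ℤ) • latE (k : ℕ)) + t * v (i + (l k : ℤ) • latE (k : ℕ)) = u i + t * v i
  rw [hu i k, hv i k]

/-- The derivative of `J0l` in the direction of the class indicator of `c`. -/
noncomputable def Dfun {n r : ℕ} (s : (B0 n r → ℝ) → ℝ) (l : Fin n → ℕ) (c : Lat n)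
    (u : Lat n → ℝ) : ℝ :=
  ∑ i ∈ Box l, fderiv ℝ s (Lcfg i u) (Lcfg i (chiCl l c))

variable {n r : ℕ} {s : (B0 n r → ℝ) → ℝ}

lemma hasDerivAt_J0l_line (hs2 : ContDiff ℝ 2 s) (l : Fin n → ℕ) (u v : Lat n → ℝ)
    (t₀ : ℝ) :
    HasDerivAt (fun t : ℝ => J0l s l (u + t • v))
      (∑ i ∈ Box l, fderiv ℝ s (Lcfg i (u + t₀ • v)) (Lcfg i v)) t₀ := by
  show HasDerivAt (fun t : ℝ => ∑ i ∈ Box l, s (Lcfg (r := r) i u + t • Lcfg i v)) _ _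
  refine HasDerivAt.fun_sum fun i _ => ?_
  have hline : HasDerivAt (fun t : ℝ => Lcfg (r := r) i u + t • Lcfg i v) (Lcfg i v) t₀ := by
    simpa using ((hasDerivAt_id t₀).smul_const (Lcfg (r := r) i v)).const_add (Lcfg i u)
  exact (hs2.differentiable (by norm_num) _).hasFDerivAt.comp_hasDerivAt t₀ hline

lemma hasDerivAt_Dfun_line (hs2 : ContDiff ℝ 2 s) (l : Fin n → ℕ) (c₀ : Lat n)
    (u v : Lat n → ℝ) (t₀ : ℝ) :
    HasDerivAt (fun t : ℝ => Dfun s l c₀ (u + t • v))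
      (∑ i ∈ Box l, fderiv ℝ (fderiv ℝ s) (Lcfg i (u + t₀ • v)) (Lcfg i v)
        (Lcfg i (chiCl l c₀))) t₀ := by
  show HasDerivAt (fun t : ℝ => ∑ i ∈ Box l,
      fderiv ℝ s (Lcfg (r := r) i u + t • Lcfg i v) (Lcfg i (chiCl l c₀))) _ _
  refine HasDerivAt.fun_sum fun i _ => ?_
  have hline : HasDerivAt (fun t : ℝ => Lcfg (r := r) i u + t • Lcfg i v) (Lcfg i v) t₀ := by
    simpa using ((hasDerivAt_id t₀).smul_const (Lcfg (r := r) i v)).const_add (Lcfg i u)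
  exact hasDerivAt_fderiv_apply hs2 hline _

lemma Dfun_eq_zero_of_min (hs : IsPotential n r s) {l : Fin n → ℕ} {u : Lat n → ℝ}
    (hu : u ∈ GammaPer l) (hmin : ∀ v ∈ GammaPer l, J0l s l u ≤ J0l s l v) (c : Lat n) :
    Dfun s l c u = 0 := by
  have hline := hasDerivAt_J0l_line hs.smooth l u (chiCl l c) 0
  have hloc : IsLocalMin (fun t : ℝ => J0l s l (u + t • chiCl l c)) 0 := by
    refine Filter.Eventually.of_forall (fun t => ?_)
    have hmem : u + t • chiCl l c ∈ GammaPer l :=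
      GammaPer.add_smul hu (chiCl_mem_GammaPer l c) t
    have h2 := hmin _ hmem
    simpa using h2
  have hz := hloc.hasDerivAt_eq_zero hline
  have h0 : u + (0 : ℝ) • chiCl l c = u := by simp
  rw [h0] at hz
  exact hz

lemma cross_term_nonpos (hs : IsPotential n r s) {l : Fin n → ℕ} {c₀ c : Lat n}
    (hcc : redl l c ≠ redl l c₀) (i : Lat n) (x : B0 n r → ℝ) :
    fderiv ℝ (fderiv ℝ s) x (Lcfg i (chiCl l c)) (Lcfg (r := r) i (chiCl l c₀)) ≤ 0 := by
  rw [clm2_expand]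
  refine Finset.sum_nonpos fun k _ => Finset.sum_nonpos fun m _ => ?_
  by_cases h1 : redl l (i + k.1) = redl l c
  · by_cases h2 : redl l (i + m.1) = redl l c₀
    · have hk1 : Lcfg (r := r) i (chiCl l c) k = 1 := by
        show (if redl l (i + k.1) = redl l c then (1:ℝ) else 0) = 1
        rw [if_pos h1]
      have hm1 : Lcfg (r := r) i (chiCl l c₀) m = 1 := by
        show (if redl l (i + m.1) = redl l c₀ then (1:ℝ) else 0) = 1
        rw [if_pos h2]
      rw [hk1, hm1, one_mul, one_mul]
      have hkm : k ≠ m := by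
        intro h
        rw [h] at h1
        rw [h1] at h2
        exact hcc h2
      rw [← pder_pder_eq hs.smooth m k x]
      exact hs.cross_nonpos k m hkm x
    · have hm0 : Lcfg (r := r) i (chiCl l c₀) m = 0 := by
        show (if redl l (i + m.1) = redl l c₀ then (1:ℝ) else 0) = 0
        rw [if_neg h2]
      rw [hm0]; ring_nf; exact le_rfl
  · have hk0 : Lcfg (r := r) i (chiCl l c) k = 0 := by
      show (if redl l (i + k.1) = redl l c then (1:ℝ) else 0) = 0
      rw [if_neg h1]
    rw [hk0]; ring_nf; exact le_rfl

lemma cross_term_summand_nonpos (hs : IsPotential n r s) {l : Fin n → ℕ} {c₀ c : Lat n}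
    (hcc : redl l c ≠ redl l c₀) (i : Lat n) (x : B0 n r → ℝ) (k m : B0 n r) :
    Lcfg i (chiCl l c) k * Lcfg (r := r) i (chiCl l c₀) m *
      fderiv ℝ (fderiv ℝ s) x (Pi.single k 1) (Pi.single m 1) ≤ 0 := by
  by_cases h1 : redl l (i + k.1) = redl l c
  · by_cases h2 : redl l (i + m.1) = redl l c₀
    · have hk1 : Lcfg (r := r) i (chiCl l c) k = 1 := by
        show (if redl l (i + k.1) = redl l c then (1:ℝ) else 0) = 1
        rw [if_pos h1]
      have hm1 : Lcfg (r := r) i (chiCl l c₀) m = 1 := by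
        show (if redl l (i + m.1) = redl l c₀ then (1:ℝ) else 0) = 1
        rw [if_pos h2]
      rw [hk1, hm1, one_mul, one_mul]
      have hkm : k ≠ m := by
        intro h
        rw [h] at h1
        rw [h1] at h2
        exact hcc h2
      rw [← pder_pder_eq hs.smooth m k x]
      exact hs.cross_nonpos k m hkm x
    · have hm0 : Lcfg (r := r) i (chiCl l c₀) m = 0 := by
        show (if redl l (i + m.1) = redl l c₀ then (1:ℝ) else 0) = 0
        rw [if_neg h2]
      rw [hm0]; ring_nf; exact le_rfl
  · have hk0 : Lcfg (r := r) i (chiCl l c) k = 0 := by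
      show (if redl l (i + k.1) = redl l c then (1:ℝ) else 0) = 0
      rw [if_neg h1]
    rw [hk0]; ring_nf; exact le_rfl

lemma cross_term_neg (hs : IsPotential n r s) (hr : 1 ≤ r) {l : Fin n → ℕ}
    (hl : ∀ k, 0 < l k) {c₀ c jd : Lat n} (hjd : latNorm jd = 1)
    (hc : redl l (c₀ + jd) = redl l c) (hcc : redl l c ≠ redl l c₀) (x : B0 n r → ℝ) :
    fderiv ℝ (fderiv ℝ s) x (Lcfg (redl l c₀) (chiCl l c))
      (Lcfg (r := r) (redl l c₀) (chiCl l c₀)) < 0 := by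
  classical
  rw [clm2_expand]
  have hkd : latNorm jd ≤ r := by rw [hjd]; omega
  have hkd_neg : (∑ m : B0 n r, Lcfg (redl l c₀) (chiCl l c) (⟨jd, hkd⟩ : B0 n r) *
      Lcfg (r := r) (redl l c₀) (chiCl l c₀) m *
      fderiv ℝ (fderiv ℝ s) x (Pi.single (⟨jd, hkd⟩ : B0 n r) 1) (Pi.single m 1)) < 0 := by
    have hstrict : Lcfg (redl l c₀) (chiCl l c) (⟨jd, hkd⟩ : B0 n r) *
        Lcfg (r := r) (redl l c₀) (chiCl l c₀) (B0.zero n r) *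
        fderiv ℝ (fderiv ℝ s) x (Pi.single (⟨jd, hkd⟩ : B0 n r) 1)
          (Pi.single (B0.zero n r) 1) < 0 := by
      have hk1 : Lcfg (r := r) (redl l c₀) (chiCl l c) (⟨jd, hkd⟩ : B0 n r) = 1 := by
        show (if redl l (redl l c₀ + jd) = redl l c then (1:ℝ) else 0) = 1
        rw [redl_add_right, hc, if_pos rfl]
      have hm1 : Lcfg (r := r) (redl l c₀) (chiCl l c₀) (B0.zero n r) = 1 := by
        show (if redl l (redl l c₀ + 0) = redl l c₀ then (1:ℝ) else 0) = 1
        rw [add_zero, redl_redl, if_pos rfl]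
      rw [hk1, hm1, one_mul, one_mul]
      rw [fderiv2_symm hs.smooth, ← pder_pder_eq hs.smooth (⟨jd, hkd⟩ : B0 n r) (B0.zero n r) x]
      exact hs.cross_neg ⟨jd, hkd⟩ hjd x
    calc (∑ m : B0 n r, Lcfg (redl l c₀) (chiCl l c) (⟨jd, hkd⟩ : B0 n r) *
          Lcfg (r := r) (redl l c₀) (chiCl l c₀) m *
          fderiv ℝ (fderiv ℝ s) x (Pi.single (⟨jd, hkd⟩ : B0 n r) 1) (Pi.single m 1))
        < ∑ _m : B0 n r, (0:ℝ) := by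
          refine Finset.sum_lt_sum
            (fun m _ => cross_term_summand_nonpos hs hcc (redl l c₀) x _ m)
            ⟨B0.zero n r, Finset.mem_univ _, hstrict⟩
      _ = 0 := by simp
  calc (∑ k : B0 n r, ∑ m : B0 n r, Lcfg (redl l c₀) (chiCl l c) k *
        Lcfg (r := r) (redl l c₀) (chiCl l c₀) m *
        fderiv ℝ (fderiv ℝ s) x (Pi.single k 1) (Pi.single m 1))
      < ∑ _k : B0 n r, (0:ℝ) := by
        refine Finset.sum_lt_sum
          (fun k _ => Finset.sum_nonpos fun m _ =>
            cross_term_summand_nonpos hs hcc (redl l c₀) x k m)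
          ⟨⟨jd, hkd⟩, Finset.mem_univ _, hkd_neg⟩
    _ = 0 := by simp

lemma Dfun_antitone (hs : IsPotential n r s) {l : Fin n → ℕ} {c₀ c : Lat n}
    (hcc : redl l c ≠ redl l c₀) (u : Lat n → ℝ) :
    Antitone (fun t : ℝ => Dfun s l c₀ (u + t • chiCl l c)) := by
  refine antitone_of_deriv_nonpos
    (fun t => (hasDerivAt_Dfun_line hs.smooth l c₀ u (chiCl l c) t).differentiableAt)
    (fun t => ?_)
  rw [(hasDerivAt_Dfun_line hs.smooth l c₀ u (chiCl l c) t).deriv]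
  exact Finset.sum_nonpos fun i _ => cross_term_nonpos hs hcc i _

lemma Dfun_strictAnti (hs : IsPotential n r s) (hr : 1 ≤ r) {l : Fin n → ℕ}
    (hl : ∀ k, 0 < l k) {c₀ c jd : Lat n} (hjd : latNorm jd = 1)
    (hc : redl l (c₀ + jd) = redl l c) (hcc : redl l c ≠ redl l c₀) (u : Lat n → ℝ) :
    StrictAnti (fun t : ℝ => Dfun s l c₀ (u + t • chiCl l c)) := by
  refine strictAnti_of_deriv_neg (fun t => ?_)
  rw [(hasDerivAt_Dfun_line hs.smooth l c₀ u (chiCl l c) t).deriv]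
  have hmem : redl l c₀ ∈ Box l := redl_mem_Box hl c₀
  calc (∑ i ∈ Box l, fderiv ℝ (fderiv ℝ s) (Lcfg i (u + t • chiCl l c))
        (Lcfg i (chiCl l c)) (Lcfg i (chiCl l c₀)))
      < ∑ _i ∈ Box l, (0:ℝ) := by
        refine Finset.sum_lt_sum (fun i _ => cross_term_nonpos hs hcc i _)
          ⟨redl l c₀, hmem, cross_term_neg hs hr hl hjd hc hcc _⟩
    _ = 0 := by simp

/-- Strong comparison: ordered minimizers touching at one point coincide. -/
theorem strong_comparison (hs : IsPotential n r s) (hr : 1 ≤ r) {l : Fin n → ℕ}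
    (hl : ∀ k, 0 < l k) {p q : Lat n → ℝ} (hp : p ∈ GammaPer l) (hq : q ∈ GammaPer l)
    (hpmin : ∀ v ∈ GammaPer l, J0l s l p ≤ J0l s l v)
    (hqmin : ∀ v ∈ GammaPer l, J0l s l q ≤ J0l s l v)
    (hpq : p ≤ q) {i₀ : Lat n} (h0 : p i₀ = q i₀) : p = q := by
  classical
  have hclp : ∀ i, p i = p (redl l i) := fun i => (LPer.redl_eq (mem_GammaPer.1 hp) i).symm
  have hclq : ∀ i, q i = q (redl l i) := fun i => (LPer.redl_eq (mem_GammaPer.1 hq) i).symm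
  -- adjacent step
  have hADJ : ∀ c₀ : Lat n, p c₀ = q c₀ → ∀ jd : Lat n, latNorm jd = 1 →
      p (c₀ + jd) = q (c₀ + jd) := by
    intro c₀ hc₀ jd hjd
    by_contra hne
    set c : Lat n := c₀ + jd with hcdef
    have hlt : p c < q c := lt_of_le_of_ne (hpq c) hne
    by_cases hsame : redl l c = redl l c₀
    · have : p c = q c := by
        rw [hclp c, hsame, ← hclp c₀, hc₀, hclq c₀, ← hsame, ← hclq c]
      exact hne this
    -- the chain
    set U : Finset (Lat n) → (Lat n → ℝ) :=
      fun A => fun i => if redl l i ∈ A then q i else p i with hU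
    have hU0 : U ∅ = p := by
      funext i
      simp [hU]
    have hUbox : U (Box l) = q := by
      funext i
      simp [hU, redl_mem_Box hl i]
    have hUG : ∀ A, U A ∈ GammaPer l := by
      intro A i k
      show (if redl l (i + (l k : ℤ) • latE (k : ℕ)) ∈ A then
          q (i + (l k : ℤ) • latE (k : ℕ)) else p (i + (l k : ℤ) • latE (k : ℕ)))
        = (if redl l i ∈ A then q i else p i)
      rw [redl_add_period, hq i k, hp i k]
    have hUins : ∀ (A : Finset (Lat n)) (b : Lat n), b ∈ Box l → b ∉ A →
        U (insert b A) = U A + (q b - p b) • chiCl l b := by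
      intro A b hbBox hbA
      have hrb : redl l b = b := redl_eq_of_mem hbBox
      funext i
      show (if redl l i ∈ insert b A then q i else p i)
          = (if redl l i ∈ A then q i else p i)
            + (q b - p b) * (if redl l i = redl l b then (1:ℝ) else 0)
      by_cases hib : redl l i = b
      · rw [if_pos (Finset.mem_insert.2 (Or.inl hib))]
        rw [if_neg (by rw [hib]; exact hbA)]
        rw [if_pos (by rw [hib, hrb])]
        have h1 : p i = p b := by rw [hclp i, hib]
        have h2 : q i = q b := by rw [hclq i, hib]
        rw [h1, h2]; ring
      · have hmem : (redl l i ∈ insert b A) ↔ (redl l i ∈ A) := by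
          rw [Finset.mem_insert]
          exact ⟨fun h => h.resolve_left hib, Or.inr⟩
        have hchi : (if redl l i = redl l b then (1:ℝ) else 0) = 0 := by
          rw [if_neg (by rw [hrb]; exact hib)]
        rw [hchi, mul_zero, add_zero, if_congr hmem rfl rfl]
    set bstar : Lat n := redl l c with hbs
    have hbsBox : bstar ∈ Box l := redl_mem_Box hl c
    have hqpb : 0 < q bstar - p bstar := by
      have h1 : p bstar = p c := by rw [hbs, ← hclp c]
      have h2 : q bstar = q c := by rw [hbs, ← hclq c]
      rw [h1, h2]
      linarith
    -- monotone step
    have hstep : ∀ (A : Finset (Lat n)) (b : Lat n), b ∈ Box l → b ∉ A →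
        Dfun s l c₀ (U (insert b A)) ≤ Dfun s l c₀ (U A)
          ∧ (b = bstar → Dfun s l c₀ (U (insert b A)) < Dfun s l c₀ (U A)) := by
      intro A b hbBox hbA
      have hrb : redl l b = b := redl_eq_of_mem hbBox
      by_cases hbc₀ : b = redl l c₀
      · have hqb : q b - p b = 0 := by
          have h1 : p b = p c₀ := by rw [hbc₀, ← hclp c₀]
          have h2 : q b = q c₀ := by rw [hbc₀, ← hclq c₀]
          rw [h1, h2, hc₀]; ring
        have hUeq : U (insert b A) = U A := by
          rw [hUins A b hbBox hbA, hqb]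
          simp
        refine ⟨by rw [hUeq], ?_⟩
        intro hbb
        exfalso
        exact hsame (hbb.symm.trans hbc₀)
      · have hcc' : redl l b ≠ redl l c₀ := by rw [hrb]; exact hbc₀
        have hanti := Dfun_antitone (c₀ := c₀) (c := b) hs hcc' (U A)
        have h00 : U A + (0:ℝ) • chiCl l b = U A := by simp
        have h0le : (0:ℝ) ≤ q b - p b := by
          have := hpq b
          linarith
        constructor
        · rw [hUins A b hbBox hbA]
          have h3 : Dfun s l c₀ (U A + (q b - p b) • chiCl l b)
              ≤ Dfun s l c₀ (U A + (0:ℝ) • chiCl l b) := hanti h0le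
          rw [h00] at h3
          exact h3
        · intro hbb
          have hc' : redl l (c₀ + jd) = redl l b := by
            rw [hbb, hbs, redl_redl]
          have hstrict := Dfun_strictAnti (c₀ := c₀) (c := b) hs hr hl hjd hc' hcc' (U A)
          have hqpb' : 0 < q b - p b := by rw [hbb]; exact hqpb
          have h3 : Dfun s l c₀ (U A + (q b - p b) • chiCl l b)
              < Dfun s l c₀ (U A + (0:ℝ) • chiCl l b) := hstrict hqpb'
          rw [h00] at h3
          rw [hUins A b hbBox hbA]
          exact h3
    -- chain induction over subsets of the box
    have hchain : ∀ A : Finset (Lat n), A ⊆ Box l →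
        Dfun s l c₀ (U A) ≤ Dfun s l c₀ p ∧
          (bstar ∈ A → Dfun s l c₀ (U A) < Dfun s l c₀ p) := by
      intro A
      induction A using Finset.induction_on with
      | empty =>
        intro _
        rw [hU0]
        exact ⟨le_rfl, fun h => absurd h (Finset.notMem_empty _)⟩
      | insert b A hbA ih =>
        intro hsub
        have hbBox : b ∈ Box l := hsub (Finset.mem_insert_self b A)
        have hAsub : A ⊆ Box l := fun x hx => hsub (Finset.mem_insert_of_mem hx)
        obtain ⟨ih1, ih2⟩ := ih hAsub
        obtain ⟨hs1, hs2⟩ := hstep A b hbBox hbA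
        refine ⟨le_trans hs1 ih1, ?_⟩
        intro hbmem
        rcases Finset.mem_insert.1 hbmem with hbb | hbA'
        · exact lt_of_lt_of_le (hs2 hbb.symm) ih1
        · exact lt_of_le_of_lt hs1 (ih2 hbA')
    have hfin := (hchain (Box l) (le_refl _)).2 hbsBox
    rw [hUbox] at hfin
    have hDq : Dfun s l c₀ q = 0 := Dfun_eq_zero_of_min hs hq hqmin c₀
    have hDp : Dfun s l c₀ p = 0 := Dfun_eq_zero_of_min hs hp hpmin c₀
    rw [hDq, hDp] at hfin
    exact lt_irrefl _ hfin
  -- propagate from i₀ by walking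
  have hall : ∀ i, p i = q i := by
    refine lat_walk (P := fun i => p i = q i) ?_ h0
    intro j hj k
    constructor
    · exact hADJ j hj (latE (k : ℕ)) (latNorm_latE k)
    · have := hADJ j hj (-(latE (k : ℕ))) (by rw [latNorm_neg, latNorm_latE])
      rwa [← sub_eq_add_neg] at this
  funext i
  exact hall i


/-- Every global periodic minimizer is fully periodic. -/
theorem min_fullyPeriodic {n r : ℕ} {s : (B0 n r → ℝ) → ℝ} (hs : IsPotential n r s)
    (hr : 1 ≤ r) {l : Fin n → ℕ} (hl : ∀ k, 0 < l k) {u : Lat n → ℝ}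
    (hu : u ∈ GammaPer l) (hmin : ∀ v ∈ GammaPer l, J0l s l u ≤ J0l s l v) :
    fullyPeriodic u := by
  intro i k
  set v : Lat n → ℝ := fun j => u (j + latE (k : ℕ)) with hv
  have hvG : v ∈ GammaPer l := GammaPer.shift hu _
  have hvJ : J0l s l v = J0l s l u := J0l_shift s hl hu _
  set a : ℕ → ℝ := fun t => u (i + (t : ℤ) • latE (k : ℕ)) with ha
  have hidx : ∀ t : ℕ, i + ((t : ℤ) + 1) • latE (k : ℕ)
      = i + (t : ℤ) • latE (k : ℕ) + latE (k : ℕ) := by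
    intro t
    rw [add_smul, one_smul]
    abel
  have ha0 : a 0 = u i := by
    show u (i + ((0 : ℕ) : ℤ) • latE (k : ℕ)) = u i
    norm_num
  have halk : a (l k) = u i := hu i k
  have ha1 : a 1 = u (i + latE (k : ℕ)) := by
    show u (i + ((1 : ℕ) : ℤ) • latE (k : ℕ)) = _
    norm_num
  by_cases hcase : ∃ i₁, u i₁ ≤ v i₁
  · obtain ⟨i₁, h₁⟩ := hcase
    set m : Lat n → ℝ := fun j => min (u j) (v j) with hm
    set M : Lat n → ℝ := fun j => max (u j) (v j) with hM
    have hmG : m ∈ GammaPer l := by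
      intro j k'
      show min (u (j + (l k' : ℤ) • latE (k' : ℕ))) (v (j + (l k' : ℤ) • latE (k' : ℕ)))
          = min (u j) (v j)
      rw [hu j k', hvG j k']
    have hMG : M ∈ GammaPer l := by
      intro j k'
      show max (u (j + (l k' : ℤ) • latE (k' : ℕ))) (v (j + (l k' : ℤ) • latE (k' : ℕ)))
          = max (u j) (v j)
      rw [hu j k', hvG j k']
    have hsub : J0l s l m + J0l s l M ≤ J0l s l u + J0l s l v := by
      rw [J0l_eq_sum, J0l_eq_sum, J0l_eq_sum, J0l_eq_sum, ← Finset.sum_add_distrib,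
        ← Finset.sum_add_distrib]
      refine Finset.sum_le_sum fun j _ => ?_
      exact submodular hs.smooth hs.cross_nonpos (Lcfg j u) (Lcfg j v)
    have hMu : J0l s l u ≤ J0l s l M := hmin M hMG
    have hmu' : J0l s l m ≤ J0l s l u := by linarith [hvJ]
    have hmmin : ∀ w ∈ GammaPer l, J0l s l m ≤ J0l s l w := fun w hw =>
      le_trans hmu' (hmin w hw)
    have hmle : m ≤ u := by
      intro j
      exact min_le_left _ _
    have htouch : m i₁ = u i₁ := min_eq_left h₁
    have hmu : m = u := strong_comparison hs hr hl hmG hu hmmin hmin hmle htouch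
    have hle : ∀ j, u j ≤ v j := by
      intro j
      have h2 : m j = u j := congrFun hmu j
      calc u j = m j := h2.symm
        _ ≤ v j := min_le_right _ _
    have hstep2 : ∀ t : ℕ, a t ≤ a (t + 1) := by
      intro t
      have h3 := hle (i + (t : ℤ) • latE (k : ℕ))
      have h4 : a (t + 1) = u (i + (t : ℤ) • latE (k : ℕ) + latE (k : ℕ)) := by
        show u (i + ((t + 1 : ℕ) : ℤ) • latE (k : ℕ)) = _
        rw [show ((t + 1 : ℕ) : ℤ) = (t : ℤ) + 1 by push_cast; ring, hidx t]
      rw [h4]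
      exact h3
    have hmon : Monotone a := monotone_nat_of_le_succ hstep2
    have h01 : a 0 ≤ a 1 := hmon (by omega)
    have h1l : a 1 ≤ a (l k) := hmon (hl k)
    rw [← ha1]
    linarith [ha0, halk]
  · push_neg at hcase
    exfalso
    have hstepB : ∀ t : ℕ, a (t + 1) < a t := by
      intro t
      have h3 := hcase (i + (t : ℤ) • latE (k : ℕ))
      have h4 : a (t + 1) = u (i + (t : ℤ) • latE (k : ℕ) + latE (k : ℕ)) := by
        show u (i + ((t + 1 : ℕ) : ℤ) • latE (k : ℕ)) = _
        rw [show ((t + 1 : ℕ) : ℤ) = (t : ℤ) + 1 by push_cast; ring, hidx t]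
      rw [h4]
      exact h3
    have hanti : StrictAnti a := strictAnti_nat_of_succ_lt hstepB
    have := hanti (hl k)
    rw [ha0, halk] at this
    exact lt_irrefl _ this

end Aux

/-- `M_0(l)` is nonempty, equals `M_0`, and `c_0(l) = (∏ l_i) c_0`. -/
theorem statement_2 (n r : ℕ) (s : (B0 (n + 2) (r + 1) → ℝ) → ℝ)
    (hs : IsPotential (n + 2) (r + 1) s) (l : Fin (n + 2) → ℕ) (hl : ∀ k, 0 < l k) :
    (M0l s l).Nonempty ∧ M0l s l = M0 s ∧ c0l s l = (∏ k, (l k : ℝ)) * c0 s := by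
  classical
  have hr : 1 ≤ r + 1 := Nat.le_add_left 1 r
  obtain ⟨u₀, hu₀G, hu₀min⟩ := exists_J0l_min hs hr hl
  have hu₀fp : fullyPeriodic u₀ := min_fullyPeriodic hs hr hl hu₀G hu₀min
  have hu₀c : ∀ i, u₀ i = u₀ 0 := fullyPeriodic_const hu₀fp
  set φ : ℝ → ℝ := fun a => s (fun _ => a) with hφ
  have hSpotconst : ∀ (w : Lat (n + 2) → ℝ), (∀ i, w i = w 0) → ∀ i, Spot s i w = φ (w 0) := by
    intro w hw i
    show s _ = s _
    congr 1
    funext kk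
    exact hw _
  have hJ0const : ∀ (w : Lat (n + 2) → ℝ), (∀ i, w i = w 0) → J0 s w = φ (w 0) := by
    intro w hw
    exact hSpotconst w hw 0
  have hconstG : ∀ a : ℝ, (fun _ : Lat (n + 2) => a) ∈ GammaPer l := fun a _ _ => rfl
  set N := (Box (n := n + 2) l).card with hN
  have hNnat : N = ∏ k, l k := by
    rw [hN, Box, Fintype.card_piFinset]
    refine Finset.prod_congr rfl fun k _ => ?_
    rw [Int.card_Ico]
    simp
  have hNcast : (N : ℝ) = ∏ k, (l k : ℝ) := by
    rw [hNnat]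
    push_cast
    rfl
  have hNpos : 0 < N := Finset.card_pos.2 ⟨0, zero_mem_Box hl⟩
  have hNposR : (0 : ℝ) < N := by exact_mod_cast hNpos
  have hJ0lconst : ∀ w : Lat (n + 2) → ℝ, (∀ i, w i = w 0) → J0l s l w = N * φ (w 0) := by
    intro w hw
    rw [J0l_eq_sum, Finset.sum_congr rfl (fun i _ => hSpotconst w hw i), Finset.sum_const,
      nsmul_eq_mul]
  have hφmin : ∀ a : ℝ, φ (u₀ 0) ≤ φ a := by
    intro a
    have h1 := hu₀min (fun _ => a) (hconstG a)
    rw [hJ0lconst u₀ hu₀c, hJ0lconst (fun _ => a) (fun _ => rfl)] at h1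
    exact le_of_mul_le_mul_left h1 hNposR
  have hc0 : c0 s = φ (u₀ 0) := by
    rw [c0]
    apply le_antisymm
    · refine csInf_le ⟨φ (u₀ 0), ?_⟩ ⟨u₀, hu₀fp, hJ0const u₀ hu₀c⟩
      rintro x ⟨w, hw, rfl⟩
      rw [hJ0const w (fullyPeriodic_const hw)]
      exact hφmin _
    · refine le_csInf ⟨J0 s u₀, u₀, hu₀fp, rfl⟩ ?_
      rintro x ⟨w, hw, rfl⟩
      rw [hJ0const w (fullyPeriodic_const hw)]
      exact hφmin _
  have hc0l : c0l s l = J0l s l u₀ := by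
    rw [c0l]
    apply le_antisymm
    · refine csInf_le ⟨J0l s l u₀, ?_⟩ ⟨u₀, hu₀G, rfl⟩
      rintro x ⟨w, hw, rfl⟩
      exact hu₀min w hw
    · refine le_csInf ⟨J0l s l u₀, u₀, hu₀G, rfl⟩ ?_
      rintro x ⟨w, hw, rfl⟩
      exact hu₀min w hw
  have hc0lval : c0l s l = (N : ℝ) * c0 s := by
    rw [hc0l, hJ0lconst u₀ hu₀c, hc0]
  have hseteq : M0l s l = M0 s := by
    ext w
    constructor
    · rintro ⟨hwG, hwJ⟩
      have hwmin : ∀ v ∈ GammaPer l, J0l s l w ≤ J0l s l v := by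
        intro v hv
        rw [hwJ, hc0l]
        exact hu₀min v hv
      have hwfp : fullyPeriodic w := min_fullyPeriodic hs hr hl hwG hwmin
      have hwc := fullyPeriodic_const hwfp
      refine ⟨hwfp, ?_⟩
      have h1 : J0l s l w = N * φ (w 0) := hJ0lconst w hwc
      have h2 : (N : ℝ) * φ (w 0) = N * φ (u₀ 0) := by
        rw [← h1, hwJ, hc0l, hJ0lconst u₀ hu₀c]
      have h3 : φ (w 0) = φ (u₀ 0) := mul_left_cancel₀ (ne_of_gt hNposR) h2
      rw [hJ0const w hwc, h3, hc0]
    · rintro ⟨hwfp, hwJ⟩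
      have hwc := fullyPeriodic_const hwfp
      have hwG : w ∈ GammaPer l := by
        intro i k
        rw [hwc (i + (l k : ℤ) • latE (k : ℕ)), hwc i]
      refine ⟨hwG, ?_⟩
      have h1 : φ (w 0) = c0 s := by
        rw [← hJ0const w hwc]
        exact hwJ
      rw [hJ0lconst w hwc, h1, hc0lval]
  refine ⟨⟨u₀, hu₀G, hc0l.symm⟩, hseteq, ?_⟩
  rw [hc0lval, hNcast]

end FK
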